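/- arXiv:2011.00862 — 2 statements merged into one kernel-verified Lean document; each statement's English description precedes it below -/
import Mathlib

section
/- Let K_{4n} be 2-edge-coloured with equal numbers of red and black edges, and suppose every perfect matching M satisfies b(M) ≠ r(M) + 0, i.e. no perfect matching is balanced. Then a contradiction follows; equivalently, among all perfect matchings of K_{4n}, the minimum of |b(M) - r(M)| is 0. -/
open Finset

/-- All edges of the complete graph on `Fin N`. -/
def allEdges (N : ℕ) : Finset (Sym2 (Fin N)) :=
  Finset.univ.filter (fun e => ¬ e.IsDiag)

/-- `M` is a perfect matching of the complete graph on `Fin N`: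
a set of non-loop edges such that every vertex lies in exactly one edge. -/
def IsPM {N : ℕ} (M : Finset (Sym2 (Fin N))) : Prop :=
  (∀ e ∈ M, ¬ e.IsDiag) ∧ ∀ v : Fin N, ∃! e, e ∈ M ∧ v ∈ e

/-- Number of edges of `F` with colour `b` (`true` = red, `false` = black). -/
def cnt {N : ℕ} (c : Sym2 (Fin N) → Bool) (b : Bool) (F : Finset (Sym2 (Fin N))) : ℕ :=
  (F.filter (fun e => c e = b)).card

/-- Vertices incident to a black edge of `M`. -/
def VB {N : ℕ} (c : Sym2 (Fin N) → Bool) (M : Finset (Sym2 (Fin N))) : Finset (Fin N) :=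
  Finset.univ.filter (fun v => ∃ e ∈ M, v ∈ e ∧ c e = false)

/-- Vertices incident to a red edge of `M`. -/
def VR {N : ℕ} (c : Sym2 (Fin N) → Bool) (M : Finset (Sym2 (Fin N))) : Finset (Fin N) :=
  Finset.univ.filter (fun v => ∃ e ∈ M, v ∈ e ∧ c e = true)

/-- Edges with one endpoint in `S` and the other in `T`. -/
def between {N : ℕ} (S T : Finset (Fin N)) : Finset (Sym2 (Fin N)) :=
  (allEdges N).filter (fun e => ∃ a ∈ S, ∃ b ∈ T, e = s(a, b))

/-- Edges of the induced subgraph on `S`. -/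
def inside {N : ℕ} (S : Finset (Fin N)) : Finset (Sym2 (Fin N)) :=
  (allEdges N).filter (fun e => ∀ v ∈ e, v ∈ S)

/-- The swapping operation `S(M, u, v, x, y)`: replace `{uv, xy}` by `{ux, vy}`. -/
def swap {N : ℕ} (M : Finset (Sym2 (Fin N))) (u v x y : Fin N) : Finset (Sym2 (Fin N)) :=
  (M \ {s(u, v), s(x, y)}) ∪ {s(u, x), s(v, y)}

namespace S12
variable {N : ℕ}


/-- weight: red(true) = +1, black(false) = -1 -/
def wt (c : Sym2 (Fin N) → Bool) (e : Sym2 (Fin N)) : ℤ := if c e then 1 else -1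

lemma wt_cases (c : Sym2 (Fin N) → Bool) (e : Sym2 (Fin N)) : wt c e = 1 ∨ wt c e = -1 := by
  unfold wt; split <;> simp

def DD (c : Sym2 (Fin N) → Bool) (F : Finset (Sym2 (Fin N))) : ℤ := ∑ e ∈ F, wt c e

lemma DD_eq_cnt (c : Sym2 (Fin N) → Bool) (F : Finset (Sym2 (Fin N))) :
    DD c F = (cnt c true F : ℤ) - (cnt c false F : ℤ) := by
  classical
  unfold DD cnt wt
  rw [Finset.sum_ite, Finset.sum_const, Finset.sum_const]
  have h2 : F.filter (fun e => ¬ c e = true) = F.filter (fun e => c e = false) := by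
    apply Finset.filter_congr; intro e _; simp
  simp [h2]; ring

/-- the mate function of a perfect matching -/
noncomputable def mate {M : Finset (Sym2 (Fin N))} (hM : IsPM M) (v : Fin N) : Fin N :=
  Sym2.Mem.other ((hM.2 v).exists.choose_spec.2)

lemma mate_edge_mem {M : Finset (Sym2 (Fin N))} (hM : IsPM M) (v : Fin N) :
    s(v, mate hM v) ∈ M := by
  unfold mate
  rw [Sym2.other_spec ((hM.2 v).exists.choose_spec.2)]
  exact (hM.2 v).exists.choose_spec.1

lemma mate_ne {M : Finset (Sym2 (Fin N))} (hM : IsPM M) (v : Fin N) : mate hM v ≠ v := by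
  intro hEq
  have := hM.1 _ (mate_edge_mem hM v)
  rw [hEq] at this
  exact this (by simp)

lemma edge_unique {M : Finset (Sym2 (Fin N))} (hM : IsPM M) {a b : Fin N}
    (h : s(a,b) ∈ M) : b = mate hM a := by
  have h2 := mate_edge_mem hM a
  have := (hM.2 a).unique ⟨h, by simp⟩ ⟨h2, by simp⟩
  rw [Sym2.eq_iff] at this
  rcases this with ⟨_, rfl⟩ | ⟨h3, rfl⟩
  · rfl
  · exact absurd (hM.1 _ h) (by simp)

lemma mate_invol {M : Finset (Sym2 (Fin N))} (hM : IsPM M) (v : Fin N) :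
    mate hM (mate hM v) = v := by
  have : s(mate hM v, v) ∈ M := by rw [Sym2.eq_swap]; exact mate_edge_mem hM v
  exact (edge_unique hM this).symm

lemma mem_rep {M : Finset (Sym2 (Fin N))} (hM : IsPM M) {e : Sym2 (Fin N)} (he : e ∈ M) :
    ∃ a, e = s(a, mate hM a) := by
  induction e using Sym2.inductionOn with
  | hf a b => exact ⟨a, by rw [edge_unique hM he]⟩


variable {M : Finset (Sym2 (Fin N))}

lemma swapPM {M : Finset (Sym2 (Fin N))} (hM : IsPM M) {a a' b b' : Fin N}
    (h1 : s(a,a') ∈ M) (h2 : s(b,b') ∈ M)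
    (hba : b ≠ a) (hba' : b ≠ a') (hb'a : b' ≠ a) (hb'a' : b' ≠ a') :
    IsPM ((M \ {s(a,a'), s(b,b')}) ∪ {s(a,b), s(a',b')}) ∧
      (∀ c : Sym2 (Fin N) → Bool,
        DD c ((M \ {s(a,a'), s(b,b')}) ∪ {s(a,b), s(a',b')}) =
          DD c M - wt c s(a,a') - wt c s(b,b') + wt c s(a,b) + wt c s(a',b')) := by
  have haa' : a ≠ a' := by intro h; exact (hM.1 _ h1) (by simp [h])
  have hbb' : b ≠ b' := by intro h; exact (hM.1 _ h2) (by simp [h])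
  have hE : s(a,a') ≠ s(b,b') := by
    intro h; rw [Sym2.eq_iff] at h; tauto
  -- uniqueness helper
  have uniq2 : ∀ {v : Fin N} {g e : Sym2 (Fin N)}, g ∈ M → v ∈ g → e ∈ M → v ∈ e → g = e :=
    fun {v g e} hg hvg he hve => (hM.2 v).unique ⟨hg, hvg⟩ ⟨he, hve⟩
  have ha'b' : a' ≠ b' := by
    intro h
    subst h
    exact hE (uniq2 (v := a') h1 (by simp) h2 (by simp))
  have hF : s(a,b) ≠ s(a',b') := by
    intro h; rw [Sym2.eq_iff] at h; tauto
  have hF1M : s(a,b) ∉ M := by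
    intro h
    have h3 := uniq2 (v := a) h (by simp) h1 (by simp)
    rw [Sym2.eq_iff] at h3
    tauto
  have hF2M : s(a',b') ∉ M := by
    intro h
    have h3 := uniq2 (v := a') h (by simp) h1 (by simp)
    rw [Sym2.eq_iff] at h3
    tauto
  constructor
  · constructor
    · intro e he
      rcases Finset.mem_union.mp he with h | h
      · exact hM.1 _ (Finset.mem_sdiff.mp h).1
      · simp only [Finset.mem_insert, Finset.mem_singleton] at h
        rcases h with rfl | rfl <;> simp [Sym2.mk_isDiag_iff, hba.symm, ha'b']
    · intro v
      by_cases hv1 : v = a ∨ v = b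
      · -- unique edge is s(a,b)
        refine ⟨s(a,b), ⟨Finset.mem_union_right _ (by simp), by rcases hv1 with rfl | rfl <;> simp⟩, ?_⟩
        rintro g ⟨hg, hvg⟩
        rcases Finset.mem_union.mp hg with h | h
        · exfalso
          have hgM := (Finset.mem_sdiff.mp h).1
          have hgne := (Finset.mem_sdiff.mp h).2
          simp only [Finset.mem_insert, Finset.mem_singleton] at hgne
          push_neg at hgne
          rcases hv1 with rfl | rfl
          · exact hgne.1 (uniq2 hgM hvg h1 (by simp))
          · exact hgne.2 (uniq2 hgM hvg h2 (by simp))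
        · simp only [Finset.mem_insert, Finset.mem_singleton] at h
          rcases h with rfl | rfl
          · rfl
          · exfalso
            rw [Sym2.mem_iff] at hvg
            rcases hv1 with rfl | rfl
            · rcases hvg with rfl | rfl
              · exact haa' rfl
              · exact hb'a rfl
            · rcases hvg with rfl | rfl
              · exact hba' rfl
              · exact hbb' rfl
      by_cases hv2 : v = a' ∨ v = b'
      · refine ⟨s(a',b'), ⟨Finset.mem_union_right _ (by simp), by rcases hv2 with rfl | rfl <;> simp⟩, ?_⟩
        rintro g ⟨hg, hvg⟩
        rcases Finset.mem_union.mp hg with h | h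
        · exfalso
          have hgM := (Finset.mem_sdiff.mp h).1
          have hgne := (Finset.mem_sdiff.mp h).2
          simp only [Finset.mem_insert, Finset.mem_singleton] at hgne
          push_neg at hgne
          rcases hv2 with rfl | rfl
          · exact hgne.1 (uniq2 hgM hvg h1 (by simp))
          · exact hgne.2 (uniq2 hgM hvg h2 (by simp))
        · simp only [Finset.mem_insert, Finset.mem_singleton] at h
          rcases h with rfl | rfl
          · exfalso
            rw [Sym2.mem_iff] at hvg
            push_neg at hv1
            rcases hv2 with rfl | rfl
            · rcases hvg with rfl | rfl
              · exact haa' rfl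
              · exact hba' rfl
            · rcases hvg with rfl | rfl
              · exact hb'a rfl
              · exact hbb' rfl
          · rfl
      · -- v untouched: its M-edge
        push_neg at hv1 hv2
        obtain ⟨e, ⟨heM, hve⟩, _⟩ := hM.2 v
        have hene1 : e ≠ s(a,a') := by
          intro rfl'
          rw [rfl', Sym2.mem_iff] at hve
          tauto
        have hene2 : e ≠ s(b,b') := by
          intro rfl'
          rw [rfl', Sym2.mem_iff] at hve
          tauto
        refine ⟨e, ⟨Finset.mem_union_left _ (Finset.mem_sdiff.mpr ⟨heM, by simp [hene1, hene2]⟩), hve⟩, ?_⟩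
        rintro g ⟨hg, hvg⟩
        rcases Finset.mem_union.mp hg with h | h
        · exact (hM.2 v).unique ⟨(Finset.mem_sdiff.mp h).1, hvg⟩ ⟨heM, hve⟩
        · exfalso
          simp only [Finset.mem_insert, Finset.mem_singleton] at h
          rcases h with rfl | rfl <;> (rw [Sym2.mem_iff] at hvg; tauto)
  · intro c
    have hdisj : Disjoint (M \ {s(a,a'), s(b,b')}) ({s(a,b), s(a',b')} : Finset (Sym2 (Fin N))) := by
      rw [Finset.disjoint_right]
      intro g hg hg2
      have := (Finset.mem_sdiff.mp hg2).1
      simp only [Finset.mem_insert, Finset.mem_singleton] at hg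
      rcases hg with rfl | rfl
      · exact hF1M this
      · exact hF2M this
    have hsub : ({s(a,a'), s(b,b')} : Finset (Sym2 (Fin N))) ⊆ M := by
      intro g hg
      simp only [Finset.mem_insert, Finset.mem_singleton] at hg
      rcases hg with rfl | rfl <;> assumption
    unfold DD
    rw [Finset.sum_union hdisj, Finset.sum_sdiff_eq_sub hsub, Finset.sum_pair hE, Finset.sum_pair hF]
    ring

lemma sym2_rep (e : Sym2 (Fin N)) : ∃ p q, e = s(p,q) :=
  Sym2.inductionOn e (fun p q => ⟨p, q, rfl⟩)

lemma mem_allEdges {e : Sym2 (Fin N)} : e ∈ allEdges N ↔ ¬ e.IsDiag := by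
  unfold allEdges; simp

lemma mk_mem_allEdges {a b : Fin N} (h : a ≠ b) : s(a,b) ∈ allEdges N := by
  rw [mem_allEdges, Sym2.mk_isDiag_iff]; exact h

lemma card_edges_at (w : Fin N) : ((allEdges N).filter (fun e => w ∈ e)).card = N - 1 := by
  have : (univ.erase w).card = ((allEdges N).filter (fun e => w ∈ e)).card := by
    apply Finset.card_bij (fun b _ => s(w, b))
    · intro b hb
      rw [Finset.mem_filter]
      exact ⟨mk_mem_allEdges (Ne.symm (Finset.mem_erase.mp hb).1), by simp⟩
    · intro b hb b' hb' hEq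
      rw [Sym2.eq_iff] at hEq
      rcases hEq with ⟨_, h2⟩ | ⟨h1, h2⟩
      · exact h2
      · exact absurd h2 (Finset.mem_erase.mp hb).1
    · intro e he
      obtain ⟨p, q, rfl⟩ := sym2_rep e
      rw [Finset.mem_filter, mem_allEdges] at he
      rcases Sym2.mem_iff.mp he.2 with h | h
      · subst h
        have hq : q ≠ w := by rintro rfl; exact he.1 (by simp)
        exact ⟨q, Finset.mem_erase.mpr ⟨hq, by simp⟩, rfl⟩
      · subst h
        have hp : p ≠ w := by rintro rfl; exact he.1 (by simp)
        exact ⟨p, Finset.mem_erase.mpr ⟨hp, by simp⟩, Sym2.eq_swap⟩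
  rw [← this, Finset.card_erase_of_mem (by simp), Finset.card_univ, Fintype.card_fin]

/-- sum over all edges of (sum of a vertex function over the two endpoints) -/
lemma sum_tau (t : Fin N → ℤ) :
    ∑ e ∈ allEdges N, (∑ w ∈ univ.filter (fun w => w ∈ e), t w)
      = (N - 1 : ℤ) * ∑ w : Fin N, t w := by
  have h1 : ∀ e ∈ allEdges N, ∑ w ∈ univ.filter (fun w => w ∈ e), t w
      = ∑ w : Fin N, if w ∈ e then t w else 0 := by
    intro e _; rw [Finset.sum_filter]
  rw [Finset.sum_congr rfl h1, Finset.sum_comm]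
  have h2 : ∀ w : Fin N, ∑ e ∈ allEdges N, (if w ∈ e then t w else 0) = (N - 1 : ℤ) * t w := by
    intro w
    rw [← Finset.sum_filter, Finset.sum_const, card_edges_at w, nsmul_eq_mul]
    have : 1 ≤ N := Fin.pos w
    rw [Nat.cast_sub this]
    push_cast
    ring
  rw [Finset.sum_congr rfl (fun w _ => h2 w), ← Finset.mul_sum]

lemma mate_inj (hM : IsPM M) {p q : Fin N} (h : mate hM p = mate hM q) : p = q := by
  have := congrArg (mate hM) h
  rwa [mate_invol, mate_invol] at this

lemma M_subset_allEdges (hM : IsPM M) : M ⊆ allEdges N := fun e he => mem_allEdges.mpr (hM.1 e he)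

lemma mk_mem_A (hM : IsPM M) {p q : Fin N} :
    s(p,q) ∈ allEdges N \ M ↔ (q ≠ p ∧ q ≠ mate hM p) := by
  rw [Finset.mem_sdiff, mem_allEdges, Sym2.mk_isDiag_iff]
  constructor
  · rintro ⟨h1, h2⟩
    exact ⟨fun h => h1 h.symm, fun h => h2 (h ▸ mate_edge_mem hM p)⟩
  · rintro ⟨h1, h2⟩
    exact ⟨fun h => h1 h.symm, fun h => h2 (edge_unique hM h)⟩

lemma phi_mem_A (hM : IsPM M) {e : Sym2 (Fin N)} (he : e ∈ allEdges N \ M) :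
    Sym2.map (mate hM) e ∈ allEdges N \ M := by
  obtain ⟨p, q, rfl⟩ := sym2_rep e
  rw [mk_mem_A hM] at he
  rw [Sym2.map_pair_eq, mk_mem_A hM]
  exact ⟨fun h => he.1 (mate_inj hM h), fun h => he.2 (by rw [← mate_invol hM p, ← h, mate_invol])⟩

lemma phi_phi (hM : IsPM M) (e : Sym2 (Fin N)) :
    Sym2.map (mate hM) (Sym2.map (mate hM) e) = e := by
  obtain ⟨p, q, rfl⟩ := sym2_rep e
  rw [Sym2.map_pair_eq, Sym2.map_pair_eq, mate_invol, mate_invol]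

lemma filter_mem_pair {p q : Fin N} (h : p ≠ q) :
    univ.filter (fun w => w ∈ s(p,q)) = ({p, q} : Finset (Fin N)) := by
  ext w
  simp only [Finset.mem_filter, Finset.mem_univ, true_and, Sym2.mem_iff,
    Finset.mem_insert, Finset.mem_singleton]

lemma sum_phi (hM : IsPM M) (f : Sym2 (Fin N) → ℤ) :
    ∑ e ∈ allEdges N \ M, f (Sym2.map (mate hM) e) = ∑ e ∈ allEdges N \ M, f e := by
  apply Finset.sum_nbij' (i := fun e => Sym2.map (mate hM) e) (j := fun e => Sym2.map (mate hM) e)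
  · intro e he; exact phi_mem_A hM he
  · intro e he; exact phi_mem_A hM he
  · intro e _; exact phi_phi hM e
  · intro e _; exact phi_phi hM e
  · intro e _; rfl

noncomputable def ef (hM : IsPM M) (w : Fin N) : Sym2 (Fin N) := s(w, mate hM w)

lemma ef_mate (hM : IsPM M) (w : Fin N) : ef hM (mate hM w) = ef hM w := by
  unfold ef; rw [mate_invol hM w, Sym2.eq_swap]

lemma ef_mem (hM : IsPM M) (w : Fin N) : ef hM w ∈ M := mate_edge_mem hM w

lemma ef_fiber (hM : IsPM M) (α : Fin N) :
    univ.filter (fun w => ef hM w = s(α, mate hM α)) = {α, mate hM α} := by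
  ext w
  simp only [Finset.mem_filter, Finset.mem_univ, true_and, Finset.mem_insert, Finset.mem_singleton]
  constructor
  · intro h
    have hw : w ∈ ef hM w := by unfold ef; simp
    rw [h, Sym2.mem_iff] at hw
    exact hw
  · rintro (rfl | rfl)
    · rfl
    · exact ef_mate hM α

lemma card_univ_eq (hM : IsPM M) : N = 2 * M.card := by
  have h1 : (univ : Finset (Fin N)).card = ∑ e ∈ M, (univ.filter (fun w => ef hM w = e)).card :=
    Finset.card_eq_sum_card_fiberwise (fun w _ => ef_mem hM w)
  have h2 : ∀ e ∈ M, (univ.filter (fun w => ef hM w = e)).card = 2 := by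
    intro e he
    obtain ⟨α, rfl⟩ := mem_rep hM he
    rw [ef_fiber hM α]
    rw [Finset.card_insert_of_notMem (by simp [Ne.symm (mate_ne hM α)]), Finset.card_singleton]
  rw [Finset.sum_congr rfl h2, Finset.sum_const, smul_eq_mul, mul_comm] at h1
  simpa using h1

lemma sum_vw (c : Sym2 (Fin N) → Bool) (hM : IsPM M) :
    ∑ w : Fin N, wt c (ef hM w) = 2 * DD c M := by
  have h1 : ∑ w : Fin N, wt c (ef hM w)
      = ∑ e ∈ M, ∑ w ∈ univ.filter (fun w => ef hM w = e), wt c (ef hM w) :=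
    (Finset.sum_fiberwise_of_maps_to (fun w _ => ef_mem hM w) _).symm
  rw [h1]
  unfold DD
  rw [Finset.mul_sum]
  apply Finset.sum_congr rfl
  intro e he
  obtain ⟨α, rfl⟩ := mem_rep hM he
  calc ∑ w ∈ univ.filter (fun w => ef hM w = s(α, mate hM α)), wt c (ef hM w)
      = ∑ w ∈ univ.filter (fun w => ef hM w = s(α, mate hM α)), wt c s(α, mate hM α) := by
        apply Finset.sum_congr rfl; intro w hw; rw [(Finset.mem_filter.mp hw).2]
    _ = 2 * wt c s(α, mate hM α) := by
        rw [Finset.sum_const, ef_fiber hM α,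
          Finset.card_insert_of_notMem (by simp [Ne.symm (mate_ne hM α)]), Finset.card_singleton]
        simp [two_mul]


lemma vw_mate (c : Sym2 (Fin N) → Bool) {M : Finset (Sym2 (Fin N))} (hM : IsPM M) (v : Fin N) :
    wt c (ef hM (mate hM v)) = wt c (ef hM v) := by rw [ef_mate]

lemma pm_exists (n : ℕ) (hn : 1 ≤ n) : ∃ M : Finset (Sym2 (Fin (4*n))), IsPM M := by
  have hN : 2*n < 4*n := by omega
  have h0 : 0 < 4*n := by omega
  set k : Fin (4*n) := ⟨2*n, hN⟩ with hk
  have hadd : ∀ a : Fin (4*n), a + k + k = a := by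
    intro a
    apply Fin.ext
    rw [Fin.add_def, Fin.add_def]
    simp only [hk]
    have ha4 : a.val < 4*n := a.isLt
    rcases Nat.lt_or_ge a.val (2*n) with h | h
    · rw [Nat.mod_eq_of_lt (show a.val + 2*n < 4*n by omega)]
      have h2 : a.val + 2*n + 2*n = a.val + 1*(4*n) := by ring
      rw [h2, Nat.add_mul_mod_self_right, Nat.mod_eq_of_lt ha4]
    · have h3 : (a.val + 2*n) % (4*n) = a.val - 2*n := by
        rw [Nat.mod_eq_sub_mod (by omega), Nat.mod_eq_of_lt (by omega)]
        omega
      rw [h3]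
      have h4 : a.val - 2*n + 2*n = a.val := by omega
      rw [h4, Nat.mod_eq_of_lt ha4]
  have hne : ∀ a : Fin (4*n), a + k ≠ a := by
    intro a hEq
    have := congrArg Fin.val hEq
    rw [Fin.add_def] at this
    simp only [hk] at this
    rcases Nat.lt_or_ge a.val (2*n) with h | h
    · rw [Nat.mod_eq_of_lt (by omega)] at this; omega
    · have ha4 : a.val < 4*n := a.isLt
      rw [Nat.mod_eq_sub_mod (by omega), Nat.mod_eq_of_lt (by omega)] at this; omega
  refine ⟨univ.image (fun a => s(a, a + k)), ?_, ?_⟩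
  · intro e he
    rw [Finset.mem_image] at he
    obtain ⟨a, _, rfl⟩ := he
    rw [Sym2.mk_isDiag_iff]
    exact Ne.symm (hne a)
  · intro v
    refine ⟨s(v, v + k), ⟨Finset.mem_image_of_mem _ (Finset.mem_univ v), by simp⟩, ?_⟩
    rintro g ⟨hg, hvg⟩
    rw [Finset.mem_image] at hg
    obtain ⟨a, _, rfl⟩ := hg
    rcases Sym2.mem_iff.mp hvg with rfl | h
    · rfl
    · have : a = v + k := by
        have := congrArg (· + k) h
        simpa [hadd] using this.symm
      subst this
      rw [hadd]
      exact Sym2.eq_swap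

set_option maxHeartbeats 1600000 in
lemma aux (n : ℕ) (hn : 1 ≤ n) (c : Sym2 (Fin (4*n)) → Bool)
    (hbal : DD c (allEdges (4*n)) = 0)
    (hne : ∀ M' : Finset (Sym2 (Fin (4*n))), IsPM M' → DD c M' ≠ 0)
    {M : Finset (Sym2 (Fin (4*n)))} (hM : IsPM M)
    (hmin : ∀ M' : Finset (Sym2 (Fin (4*n))), IsPM M' → |DD c M| ≤ |DD c M'|)
    (hDneg : DD c M < 0) : False := by
  classical
  set σ : Fin (4*n) → Fin (4*n) := mate hM with hσ
  set t : Fin (4*n) → ℤ := fun w => wt c (ef hM w) with ht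
  set D : ℤ := DD c M with hD
  -- D ≤ -2
  have hD2 : D ≤ -2 := by
    have hcard : (4*n) = 2 * M.card := card_univ_eq hM
    have hTF : cnt c true M + cnt c false M = M.card := by
      have key := Finset.card_filter_add_card_filter_not (s := M) (p := fun e => c e = true)
      have h2 : M.filter (fun a => ¬ (c a = true)) = M.filter (fun e => c e = false) := by
        apply Finset.filter_congr; intro e _; simp
      rw [h2] at key
      unfold cnt
      omega
    have hDc := DD_eq_cnt c M
    rw [← hD] at hDc
    omega
  have hσσ : ∀ w, σ (σ w) = w := fun w => mate_invol hM w
  have hσinj : ∀ {a b : Fin (4*n)}, σ a = σ b → a = b := fun {a b} h => mate_inj hM h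
  have hσne : ∀ w, σ w ≠ w := mate_ne hM
  have hedge : ∀ w : Fin (4*n), s(w, σ w) ∈ M := mate_edge_mem hM
  -- the basic swap constraint
  have con : ∀ p q : Fin (4*n), q ≠ p → q ≠ σ p →
      (D - t p - t q + wt c s(p,q) + wt c s(σ p, σ q) ≠ 0) ∧
      (-D ≤ |D - t p - t q + wt c s(p,q) + wt c s(σ p, σ q)|) := by
    intro p q h1 h2
    have hq' : σ q ≠ p := by
      intro h; exact h2 (by rw [← h, hσσ])
    have hq'' : σ q ≠ σ p := fun h => h1 (hσinj h)
    obtain ⟨hPM', hDD'⟩ := swapPM hM (hedge p) (hedge q) h1 h2 hq' hq''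
    have hval := hDD' c
    constructor
    · intro h0
      exact hne _ hPM' (by rw [hval]; rw [← hD, ← ht] at *; exact h0)
    · have := hmin _ hPM'
      rw [hval, ← hD] at this
      rw [abs_of_neg hDneg] at this
      exact this
  -- t of mate
  have htm : ∀ w, t (σ w) = t w := fun w => vw_mate c hM w
  have tcases : ∀ w, t w = 1 ∨ t w = -1 := fun w => wt_cases c (ef hM w)
  -- A and its sum
  set A : Finset (Sym2 (Fin (4*n))) := allEdges (4*n) \ M with hA
  have hAsum : ∑ e ∈ A, wt c e = -D := by
    have := Finset.sum_sdiff_eq_sub (f := wt c) (M_subset_allEdges hM)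
    rw [← hA] at this
    have hb : ∑ e ∈ allEdges (4*n), wt c e = 0 := hbal
    have hMD : (∑ x ∈ M, wt c x) = D := hD.symm
    rw [this, hb, hMD]
    ring
  by_cases hc : ∃ p q, q ≠ p ∧ q ≠ σ p ∧ t p = -1 ∧ t q = -1 ∧
      wt c s(p,q) = 1 ∧ wt c s(σ p, σ q) = 1
  · -- CASE 2
    obtain ⟨u, x, hxu, hxm, htu, htx, hw1, hw2⟩ := hc
    -- abbreviations
    have hwuv : wt c s(u, σ u) = -1 := htu
    have hwxy : wt c s(x, σ x) = -1 := htx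
    -- D = -2
    have hDm2 : D = -2 := by
      obtain ⟨hcne, hcle⟩ := con u x hxu hxm
      rcases abs_choice (D - t u - t x + wt c s(u,x) + wt c s(σ u, σ x)) with hab | hab <;>
        omega
    -- mates and distinctness
    have hmx_u : σ x ≠ u := by
      intro h; exact hxm (by rw [← h, hσσ])
    have hmx_mu : σ x ≠ σ u := fun h => hxu (hσinj h)
    have hvu : σ u ≠ u := mate_ne hM u
    have hyx : σ x ≠ x := mate_ne hM x
    have hxmu : x ≠ σ u := hxm
    -- M1
    obtain ⟨hM1, hDD1f⟩ := swapPM hM (hedge u) (hedge x) hxu hxm hmx_u hmx_mu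
    set M1 : Finset (Sym2 (Fin (4*n))) :=
      (M \ {s(u, σ u), s(x, σ x)}) ∪ {s(u, x), s(σ u, σ x)} with hM1def
    have hDD1 : DD c M1 = 2 := by
      rw [hM1def, hDD1f c, hwuv, hwxy, hw1, hw2, ← hD, hDm2]
      ring
    -- Q set
    set Qs : Finset (Fin (4*n)) := {u, σ u, x, σ x} with hQs
    have hQt : ∀ w ∈ Qs, t w = -1 := by
      intro w hw
      rw [hQs] at hw
      simp only [Finset.mem_insert, Finset.mem_singleton] at hw
      rcases hw with rfl | rfl | rfl | rfl
      · exact htu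
      · rw [htm]; exact htu
      · exact htx
      · rw [htm]; exact htx
    have hQσ : ∀ w, w ∈ Qs → σ w ∈ Qs := by
      intro w hw
      rw [hQs] at hw ⊢
      simp only [Finset.mem_insert, Finset.mem_singleton] at hw ⊢
      rcases hw with rfl | rfl | rfl | rfl
      · tauto
      · rw [hσσ]; tauto
      · tauto
      · rw [hσσ]; tauto
    have hQσ' : ∀ w, w ∉ Qs → σ w ∉ Qs := by
      intro w hw hsw
      exact hw (by have := hQσ _ hsw; rwa [hσσ] at this)
    -- memberships in M1
    have hM1mem : ∀ w, w ∉ Qs → s(w, σ w) ∈ M1 := by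
      intro w hw
      apply Finset.mem_union_left
      rw [Finset.mem_sdiff]
      refine ⟨mate_edge_mem hM w, ?_⟩
      simp only [Finset.mem_insert, Finset.mem_singleton]
      rintro (h | h) <;>
      · have hwmem : w ∈ s(w, σ w) := by simp
        rw [h, Sym2.mem_iff] at hwmem
        apply hw
        rw [hQs]
        simp only [Finset.mem_insert, Finset.mem_singleton]
        tauto
    have hux1 : s(u,x) ∈ M1 := Finset.mem_union_right _ (by simp)
    have hvy1 : s(σ u, σ x) ∈ M1 := Finset.mem_union_right _ (by simp)
    -- constraint from M1-swaps
    have con1 : ∀ p p' q q' : Fin (4*n), s(p,p') ∈ M1 → s(q,q') ∈ M1 →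
        q ≠ p → q ≠ p' → q' ≠ p → q' ≠ p' →
        (2 - wt c s(p,p') - wt c s(q,q') + wt c s(p,q) + wt c s(p',q') ≠ 0) ∧
        (2 ≤ |2 - wt c s(p,p') - wt c s(q,q') + wt c s(p,q) + wt c s(p',q')|) := by
      intro p p' q q' h1 h2 d1 d2 d3 d4
      obtain ⟨hPM2, hf2⟩ := swapPM hM1 h1 h2 d1 d2 d3 d4
      have hval := hf2 c
      rw [hDD1] at hval
      constructor
      · intro h0
        exact hne _ hPM2 (by rw [hval]; exact h0)
      · have := hmin _ hPM2
        rw [hval] at this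
        rw [abs_of_neg hDneg, hDm2] at this
        linarith [this]
    -- helper: different t values imply valid pair
    have hdiff : ∀ α β : Fin (4*n), t α ≠ t β → (β ≠ α ∧ β ≠ σ α) := by
      intro α β hab
      constructor
      · rintro rfl; exact hab rfl
      · rintro rfl; exact hab (htm α).symm
    -- C1
    have C1 : ∀ p q, t p = -1 → t q = -1 → q ≠ p → q ≠ σ p →
        wt c s(p,q) = wt c s(σ p, σ q) := by
      intro p q hp hq h1 h2
      obtain ⟨hcne, _⟩ := con p q h1 h2
      rcases wt_cases c s(p,q) with he1 | he1 <;>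
        rcases wt_cases c s(σ p, σ q) with he2 | he2 <;>
        omega
    -- C2
    have C2 : ∀ p q, t p = 1 → t q = 1 → q ≠ p → q ≠ σ p →
        wt c s(p,q) = wt c s(σ p, σ q) := by
      intro p q hp hq h1 h2
      have hpQ : p ∉ Qs := fun h => by rw [hQt p h] at hp; omega
      have hqQ : q ∉ Qs := fun h => by rw [hQt q h] at hq; omega
      have d3 : σ q ≠ p := by intro h; exact h2 (by rw [← h, hσσ])
      have d4 : σ q ≠ σ p := fun h => h1 (hσinj h)
      obtain ⟨hcne, _⟩ := con1 p (σ p) q (σ q) (hM1mem p hpQ) (hM1mem q hqQ) h1 h2 d3 d4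
      have hp' : wt c s(p, σ p) = 1 := hp
      have hq' : wt c s(q, σ q) = 1 := hq
      rcases wt_cases c s(p,q) with he1 | he1 <;>
        rcases wt_cases c s(σ p, σ q) with he2 | he2 <;>
        omega
    -- C3
    have C3 : ∀ p q, t p = -1 → p ∉ Qs → t q = 1 →
        wt c s(p,q) + wt c s(σ p, σ q) = 0 := by
      intro p q hp hpQ hq
      obtain ⟨h1, h2⟩ := hdiff p q (by omega)
      have hqQ : q ∉ Qs := fun h => by rw [hQt q h] at hq; omega
      have d3 : σ q ≠ p := by intro h; exact h2 (by rw [← h, hσσ])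
      have d4 : σ q ≠ σ p := fun h => h1 (hσinj h)
      obtain ⟨hcne, hcle⟩ := con p q h1 h2
      obtain ⟨hcne1, _⟩ := con1 p (σ p) q (σ q) (hM1mem p hpQ) (hM1mem q hqQ) h1 h2 d3 d4
      have hp' : wt c s(p, σ p) = -1 := hp
      have hq' : wt c s(q, σ q) = 1 := hq
      rcases abs_choice (D - t p - t q + wt c s(p,q) + wt c s(σ p, σ q)) with hab | hab <;>
        rcases wt_cases c s(p,q) with he1 | he1 <;>
        rcases wt_cases c s(σ p, σ q) with he2 | he2 <;>
        omega
    -- C4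
    have C4a : ∀ q, t q = 1 → wt c s(u,q) = wt c s(x, σ q) := by
      intro q hq
      have hqQ : q ∉ Qs := fun h => by rw [hQt q h] at hq; omega
      have hqu : q ≠ u := by rintro rfl; rw [htu] at hq; omega
      have hqx : q ≠ x := by rintro rfl; rw [htx] at hq; omega
      have hqu' : σ q ≠ u := by
        rintro h; have := htm q; rw [h, htu] at this; omega
      have hqx' : σ q ≠ x := by
        rintro h; have := htm q; rw [h, htx] at this; omega
      obtain ⟨hcne, _⟩ := con1 u x q (σ q) hux1 (hM1mem q hqQ) hqu hqx hqu' hqx'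
      have hq' : wt c s(q, σ q) = 1 := hq
      rcases wt_cases c s(u,q) with he1 | he1 <;>
        rcases wt_cases c s(x, σ q) with he2 | he2 <;>
        omega
    have C4b : ∀ q, t q = 1 → wt c s(σ u, q) = wt c s(σ x, σ q) := by
      intro q hq
      have hqQ : q ∉ Qs := fun h => by rw [hQt q h] at hq; omega
      have htv : t (σ u) = -1 := by rw [htm]; exact htu
      have hty : t (σ x) = -1 := by rw [htm]; exact htx
      have hqv : q ≠ σ u := by rintro rfl; rw [htv] at hq; omega
      have hqy : q ≠ σ x := by rintro rfl; rw [hty] at hq; omega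
      have hqv' : σ q ≠ σ u := by
        rintro h; have := htm q; rw [h, htv] at this; omega
      have hqy' : σ q ≠ σ x := by
        rintro h; have := htm q; rw [h, hty] at this; omega
      obtain ⟨hcne, _⟩ := con1 (σ u) (σ x) q (σ q) hvy1 (hM1mem q hqQ) hqv hqy hqv' hqy'
      have hq' : wt c s(q, σ q) = 1 := hq
      rcases wt_cases c s(σ u, q) with he1 | he1 <;>
        rcases wt_cases c s(σ x, σ q) with he2 | he2 <;>
        omega
    -- now the accounting
    have hA2 : ∑ e ∈ A, wt c e = 2 := by rw [hAsum, hDm2]; ring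
    set RV : Finset (Fin (4*n)) := univ.filter (fun w => t w = 1) with hRV
    set AQ : Finset (Sym2 (Fin (4*n))) :=
      (RV ×ˢ Qs).image (fun z => s(z.2, z.1)) with hAQ
    -- membership characterization of AQ
    have hAQmem : ∀ α β : Fin (4*n), s(α,β) ∈ AQ ↔
        ((α ∈ Qs ∧ t β = 1) ∨ (β ∈ Qs ∧ t α = 1)) := by
      intro α β
      rw [hAQ, Finset.mem_image]
      constructor
      · rintro ⟨⟨w, q⟩, hz, hEq⟩
        rw [Finset.mem_product, hRV, Finset.mem_filter] at hz
        obtain ⟨⟨_, hw⟩, hq⟩ := hz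
        simp only at hEq
        rw [Sym2.eq_iff] at hEq
        rcases hEq with ⟨h1, h2⟩ | ⟨h1, h2⟩
        · subst h1; subst h2; exact Or.inl ⟨hq, hw⟩
        · subst h1; subst h2; exact Or.inr ⟨hq, hw⟩
      · rintro (⟨h1, h2⟩ | ⟨h1, h2⟩)
        · exact ⟨(β, α), by rw [Finset.mem_product, hRV, Finset.mem_filter]; exact ⟨⟨Finset.mem_univ _, h2⟩, h1⟩, rfl⟩
        · exact ⟨(α, β), by rw [Finset.mem_product, hRV, Finset.mem_filter]; exact ⟨⟨Finset.mem_univ _, h2⟩, h1⟩, Sym2.eq_swap⟩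
    have hAQsub : AQ ⊆ A := by
      intro e he
      obtain ⟨p, q, rfl⟩ := sym2_rep e
      rw [hAQmem] at he
      rw [hA, mk_mem_A hM, ← hσ]
      rcases he with ⟨h1, h2⟩ | ⟨h1, h2⟩
      · have htp : t p = -1 := hQt p h1
        refine ⟨by rintro rfl; omega, ?_⟩
        rintro rfl
        rw [htm] at h2; omega
      · have htq : t q = -1 := hQt q h1
        refine ⟨by rintro rfl; omega, ?_⟩
        rintro rfl
        have h3 := hQσ _ h1
        rw [hσσ] at h3
        exact absurd (hQt p h3) (by omega)
    -- u, σu, x, σx pairwise distinct, so the Qs sum splits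
    have hyu : σ x ≠ u := hmx_u
    have hF : ∀ w, ∑ q ∈ Qs, wt c s(q, w)
        = wt c s(u,w) + wt c s(σ u,w) + wt c s(x,w) + wt c s(σ x,w) := by
      intro w
      rw [hQs]
      rw [Finset.sum_insert (by simp [Ne.symm hvu, Ne.symm hxu, Ne.symm hmx_u]),
        Finset.sum_insert (by simp [Ne.symm hxm, Ne.symm hmx_mu]),
        Finset.sum_pair (Ne.symm hyx)]
      ring
    have hAQsum : ∑ e ∈ AQ, wt c e = ∑ w ∈ RV, (wt c s(u,w) + wt c s(σ u,w) + wt c s(x,w) + wt c s(σ x,w)) := by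
      have hinj : ∀ z ∈ RV ×ˢ Qs, ∀ z' ∈ RV ×ˢ Qs,
          (fun z : Fin (4*n) × Fin (4*n) => s(z.2, z.1)) z
            = (fun z : Fin (4*n) × Fin (4*n) => s(z.2, z.1)) z' → z = z' := by
        rintro ⟨w, q⟩ hz ⟨w', q'⟩ hz' hEq
        rw [Finset.mem_product] at hz hz'
        simp only at hz hz' hEq
        rw [hRV, Finset.mem_filter] at hz hz'
        rw [Sym2.eq_iff] at hEq
        rcases hEq with ⟨h1, h2⟩ | ⟨h1, h2⟩
        · simp [h1, h2]
        · exfalso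
          have hA1 := hQt _ hz.2
          have hB1 := hz'.1.2
          rw [← h1] at hB1
          omega
      rw [hAQ, Finset.sum_image hinj, Finset.sum_product]
      apply Finset.sum_congr rfl
      intro w _
      exact hF w
    -- 4 ∣ AQ sum
    have hAQdvd : (4:ℤ) ∣ ∑ e ∈ AQ, wt c e := by
      rw [hAQsum]
      set F : Fin (4*n) → ℤ :=
        fun w => wt c s(u,w) + wt c s(σ u,w) + wt c s(x,w) + wt c s(σ x,w) with hFdef
      have hFinv : ∀ w, t w = 1 → F (σ w) = F w := by
        intro w hw
        rw [hFdef]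
        simp only
        have e1 : wt c s(u, σ w) = wt c s(x, w) := by
          have := C4a (σ w) (by rw [htm]; exact hw)
          rwa [hσσ] at this
        have e2 : wt c s(σ u, σ w) = wt c s(σ x, w) := by
          have := C4b (σ w) (by rw [htm]; exact hw)
          rwa [hσσ] at this
        have e3 : wt c s(x, σ w) = wt c s(u, w) := (C4a w hw).symm
        have e4 : wt c s(σ x, σ w) = wt c s(σ u, w) := (C4b w hw).symm
        rw [e1, e2, e3, e4]
        ring
      have hFeven : ∀ w, (2:ℤ) ∣ F w := by
        intro w
        rw [hFdef]
        rcases wt_cases c s(u,w) with h1 | h1 <;>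
          rcases wt_cases c s(σ u,w) with h2 | h2 <;>
          rcases wt_cases c s(x,w) with h3 | h3 <;>
          rcases wt_cases c s(σ x,w) with h4 | h4 <;>
          simp only [h1, h2, h3, h4] <;> decide
      have hcast : ((∑ w ∈ RV, F w : ℤ) : ZMod 4) = 0 := by
        push_cast
        apply Finset.sum_involution (fun w _ => σ w)
        · intro w hw
          rw [hRV, Finset.mem_filter] at hw
          have h4 : (4:ℤ) ∣ F w + F (σ w) := by
            rw [hFinv w hw.2]
            obtain ⟨k, hk⟩ := hFeven w
            exact ⟨k, by omega⟩
          have : ((F w + F (σ w) : ℤ) : ZMod 4) = 0 :=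
            (ZMod.intCast_zmod_eq_zero_iff_dvd _ 4).mpr h4
          push_cast at this
          exact this
        · intro w hw _
          exact mate_ne hM w
        · intro w hw
          rw [hRV, Finset.mem_filter] at hw ⊢
          exact ⟨Finset.mem_univ _, by rw [htm]; exact hw.2⟩
        · intro w hw
          exact hσσ w
      have := (ZMod.intCast_zmod_eq_zero_iff_dvd (∑ w ∈ RV, F w) 4).mp hcast
      exact this
    -- the fiber part
    set A2 : Finset (Sym2 (Fin (4*n))) := A \ AQ with hA2def
    have hsplit : ∑ e ∈ A2, wt c e + ∑ e ∈ AQ, wt c e = ∑ e ∈ A, wt c e :=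
      Finset.sum_sdiff hAQsub
    have hQiff : ∀ w, σ w ∈ Qs ↔ w ∈ Qs := by
      intro w
      constructor
      · intro h; have := hQσ _ h; rwa [hσσ] at this
      · exact hQσ w
    set κ : Sym2 (Fin (4*n)) → Sym2 (Sym2 (Fin (4*n))) := Sym2.map (fun w => s(w, σ w)) with hκ
    have hκpair : ∀ a b : Fin (4*n), κ s(a,b) = s(s(a, σ a), s(b, σ b)) := by
      intro a b; rw [hκ, Sym2.map_pair_eq]
    have hA2dvd : (4:ℤ) ∣ ∑ e ∈ A2, wt c e := by
      have hfw := Finset.sum_fiberwise_of_maps_to (g := κ) (s := A2) (t := A2.image κ)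
        (fun e he => Finset.mem_image_of_mem κ he) (wt c)
      rw [← hfw]
      apply Finset.dvd_sum
      intro K hK
      obtain ⟨e0, he0, rfl⟩ := Finset.mem_image.mp hK
      obtain ⟨p, q, rfl⟩ := sym2_rep e0
      have he0A : s(p,q) ∈ A := (Finset.mem_sdiff.mp he0).1
      have he0Q : s(p,q) ∉ AQ := (Finset.mem_sdiff.mp he0).2
      rw [hA, mk_mem_A hM, ← hσ] at he0A
      obtain ⟨h1, h2⟩ := he0A
      have h3 : σ q ≠ p := fun h => h2 (by rw [← h, hσσ])
      have h4 : σ q ≠ σ p := fun h => h1 (hσinj h)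
      have k1 : p ≠ σ p := Ne.symm (hσne p)
      have k2 : q ≠ σ q := Ne.symm (hσne q)
      have h1' : p ≠ q := Ne.symm h1
      have h2' : σ p ≠ q := Ne.symm h2
      have h3' : p ≠ σ q := Ne.symm h3
      have h4' : σ p ≠ σ q := Ne.symm h4
      -- AQ-membership stability
      have hAQstable : ∀ α β : Fin (4*n), (α ∈ Qs ↔ p ∈ Qs) → (β ∈ Qs ↔ q ∈ Qs) →
          t α = t p → t β = t q → s(α,β) ∉ AQ := by
        intro α β hαQ hβQ hαt hβt hmem
        rw [hAQmem] at hmem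
        apply he0Q
        rw [hAQmem]
        rcases hmem with ⟨hA1, hA2x⟩ | ⟨hA1, hA2x⟩
        · exact Or.inl ⟨hαQ.mp hA1, by rw [← hβt]; exact hA2x⟩
        · exact Or.inr ⟨hβQ.mp hA1, by rw [← hαt]; exact hA2x⟩
      -- the fiber is the explicit 4-element set
      have hEσ : ∀ a : Fin (4*n), s(σ a, σ (σ a)) = s(a, σ a) := by
        intro a; rw [hσσ]; exact Sym2.eq_swap
      have hfib : A2.filter (fun e => κ e = κ s(p,q))
          = {s(p,q), s(σ p, σ q), s(p, σ q), s(σ p, q)} := by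
        ext e
        simp only [Finset.mem_filter, Finset.mem_insert, Finset.mem_singleton]
        constructor
        · rintro ⟨heA2, hκe⟩
          obtain ⟨α, β, rfl⟩ := sym2_rep e
          rw [hκpair, hκpair, Sym2.eq_iff] at hκe
          have hEE : ∀ a b : Fin (4*n), s(a, σ a) = s(b, σ b) → a = b ∨ a = σ b := by
            intro a b hEq
            rw [Sym2.eq_iff] at hEq
            rcases hEq with ⟨hh, _⟩ | ⟨hh, _⟩
            · exact Or.inl hh
            · exact Or.inr hh
          rcases hκe with ⟨hα, hβ⟩ | ⟨hα, hβ⟩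
          · rcases hEE _ _ hα with rfl | hav <;> rcases hEE _ _ hβ with rfl | hbv
            · exact Or.inl rfl
            · subst hbv; exact Or.inr (Or.inr (Or.inl rfl))
            · subst hav; exact Or.inr (Or.inr (Or.inr rfl))
            · subst hav; subst hbv; exact Or.inr (Or.inl rfl)
          · rcases hEE _ _ hα with rfl | hav <;> rcases hEE _ _ hβ with rfl | hbv
            · exact Or.inl Sym2.eq_swap
            · subst hbv
              exact Or.inr (Or.inr (Or.inr Sym2.eq_swap))
            · subst hav
              exact Or.inr (Or.inr (Or.inl Sym2.eq_swap))
            · subst hav; subst hbv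
              exact Or.inr (Or.inl Sym2.eq_swap)
        · have hm1 : s(p,q) ∈ A2 := he0
          have hm2 : s(σ p, σ q) ∈ A2 := by
            rw [hA2def, Finset.mem_sdiff]
            constructor
            · rw [hA, mk_mem_A hM, ← hσ]
              refine ⟨h4, ?_⟩
              rw [hσσ]
              exact h3
            · exact hAQstable _ _ (hQiff p) (hQiff q) (htm p) (htm q)
          have hm3 : s(p, σ q) ∈ A2 := by
            rw [hA2def, Finset.mem_sdiff]
            constructor
            · rw [hA, mk_mem_A hM, ← hσ]
              exact ⟨h3, h4⟩
            · exact hAQstable _ _ (Iff.rfl) (hQiff q) rfl (htm q)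
          have hm4 : s(σ p, q) ∈ A2 := by
            rw [hA2def, Finset.mem_sdiff]
            constructor
            · rw [hA, mk_mem_A hM, ← hσ]
              refine ⟨h2, ?_⟩
              rw [hσσ]
              exact h1
            · exact hAQstable _ _ (hQiff p) (Iff.rfl) (htm p) rfl
          have hκ2 : κ s(σ p, σ q) = κ s(p,q) := by
            rw [hκpair, hκpair, hEσ, hEσ]
          have hκ3 : κ s(p, σ q) = κ s(p,q) := by
            rw [hκpair, hκpair, hEσ]
          have hκ4 : κ s(σ p, q) = κ s(p,q) := by
            rw [hκpair, hκpair, hEσ]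
          rintro (rfl | rfl | rfl | rfl)
          · exact ⟨hm1, rfl⟩
          · exact ⟨hm2, hκ2⟩
          · exact ⟨hm3, hκ3⟩
          · exact ⟨hm4, hκ4⟩
      rw [hfib]
      -- distinctness of the four edges
      have hd1 : s(p,q) ≠ s(σ p, σ q) := by
        rw [Ne, Sym2.eq_iff]
        rintro (⟨a1, a2⟩ | ⟨a1, a2⟩)
        · exact k1 a1
        · exact h3' a1
      have hd2 : s(p,q) ≠ s(p, σ q) := by
        rw [Ne, Sym2.eq_iff]
        rintro (⟨a1, a2⟩ | ⟨a1, a2⟩)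
        · exact k2 a2
        · exact h3' a1
      have hd3 : s(p,q) ≠ s(σ p, q) := by
        rw [Ne, Sym2.eq_iff]
        rintro (⟨a1, a2⟩ | ⟨a1, a2⟩)
        · exact k1 a1
        · exact h1' a1
      have hd4 : s(σ p, σ q) ≠ s(p, σ q) := by
        rw [Ne, Sym2.eq_iff]
        rintro (⟨a1, a2⟩ | ⟨a1, a2⟩)
        · exact hσne p a1
        · exact h4' a1
      have hd5 : s(σ p, σ q) ≠ s(σ p, q) := by
        rw [Ne, Sym2.eq_iff]
        rintro (⟨a1, a2⟩ | ⟨a1, a2⟩)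
        · exact hσne q a2
        · exact h2' a1
      have hd6 : s(p, σ q) ≠ s(σ p, q) := by
        rw [Ne, Sym2.eq_iff]
        rintro (⟨a1, a2⟩ | ⟨a1, a2⟩)
        · exact k1 a1
        · exact h1' a1
      rw [Finset.sum_insert (by simp [hd1, hd2, hd3]),
        Finset.sum_insert (by simp [hd4, hd5]),
        Finset.sum_pair hd6]
      -- now the colour analysis
      rcases tcases p with hp | hp <;> rcases tcases q with hq | hq
      · -- both red
        have e1 := C2 p q hp hq h1 h2
        have e2 := C2 p (σ q) hp (by rw [htm]; exact hq) h3 h4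
        rw [hσσ] at e2
        rcases wt_cases c s(p,q) with w1 | w1 <;>
          rcases wt_cases c s(p, σ q) with w2 | w2 <;>
          rw [w1] at e1 <;> rw [w2] at e2 <;> omega
      · -- p red, q black: q ∉ Qs
        have hqQ : q ∉ Qs := by
          intro hmem
          exact he0Q (by rw [hAQmem]; exact Or.inr ⟨hmem, hp⟩)
        have e1 := C3 q p hq hqQ hp
        rw [show s(q,p) = s(p,q) from Sym2.eq_swap,
          show s(σ q, σ p) = s(σ p, σ q) from Sym2.eq_swap] at e1
        have e2 := C3 q (σ p) hq hqQ (by rw [htm]; exact hp)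
        rw [hσσ] at e2
        rw [show s(q, σ p) = s(σ p, q) from Sym2.eq_swap,
          show s(σ q, p) = s(p, σ q) from Sym2.eq_swap] at e2
        omega
      · -- p black, q red: p ∉ Qs
        have hpQ : p ∉ Qs := by
          intro hmem
          exact he0Q (by rw [hAQmem]; exact Or.inl ⟨hmem, hq⟩)
        have e1 := C3 p q hp hpQ hq
        have e2 := C3 p (σ q) hp hpQ (by rw [htm]; exact hq)
        rw [hσσ] at e2
        omega
      · -- both black
        have e1 := C1 p q hp hq h1 h2
        have e2 := C1 p (σ q) hp (by rw [htm]; exact hq) h3 h4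
        rw [hσσ] at e2
        rcases wt_cases c s(p,q) with w1 | w1 <;>
          rcases wt_cases c s(p, σ q) with w2 | w2 <;>
          rw [w1] at e1 <;> rw [w2] at e2 <;> omega
    -- conclude
    obtain ⟨j1, hj1⟩ := hA2dvd
    obtain ⟨j2, hj2⟩ := hAQdvd
    rw [hA2] at hsplit
    omega
  · -- CASE 1
    push_neg at hc
    have hbound : ∀ e ∈ A, wt c e + wt c (Sym2.map σ e)
        ≤ ∑ w ∈ univ.filter (fun w => w ∈ e), t w := by
      intro e heA
      obtain ⟨p, q, rfl⟩ := sym2_rep e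
      rw [hA, mk_mem_A hM, ← hσ] at heA
      obtain ⟨h1, h2⟩ := heA
      have hpq : p ≠ q := fun h => h1 h.symm
      rw [filter_mem_pair hpq, Finset.sum_pair hpq, Sym2.map_pair_eq]
      obtain ⟨hcne, hcle⟩ := con p q h1 h2
      rcases abs_choice (D - t p - t q + wt c s(p,q) + wt c s(σ p, σ q)) with hab | hab <;>
      rcases tcases p with hp | hp <;> rcases tcases q with hq | hq <;>
      rcases wt_cases c s(p,q) with he1 | he1 <;>
      rcases wt_cases c s(σ p, σ q) with he2 | he2 <;>
      first
        | omega
        | exact absurd he2 (hc p q h1 h2 hp hq he1)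
    -- sum bound
    have hS : 2 * ∑ e ∈ A, wt c e ≤ ∑ e ∈ A, ∑ w ∈ univ.filter (fun w => w ∈ e), t w := by
      have : 2 * ∑ e ∈ A, wt c e = ∑ e ∈ A, (wt c e + wt c (Sym2.map σ e)) := by
        rw [Finset.sum_add_distrib]
        rw [hA, sum_phi hM (wt c), ← hA]
        ring
      rw [this]
      exact Finset.sum_le_sum hbound
    -- compute the tau sum
    have hMtau : ∑ e ∈ M, ∑ w ∈ univ.filter (fun w => w ∈ e), t w = 2 * D := by
      have hper : ∀ e ∈ M, ∑ w ∈ univ.filter (fun w => w ∈ e), t w = 2 * wt c e := by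
        intro e he
        obtain ⟨α, rfl⟩ := mem_rep hM he
        have hne' : α ≠ mate hM α := Ne.symm (mate_ne hM α)
        rw [filter_mem_pair hne', Finset.sum_pair hne']
        have h1 : t α = wt c s(α, mate hM α) := rfl
        have h2 : t (mate hM α) = t α := htm α
        rw [h2, h1]
        ring
      rw [Finset.sum_congr rfl hper, ← Finset.mul_sum]
      have hMD : (∑ e ∈ M, wt c e) = D := hD.symm
      rw [hMD]
    have hAtau : ∑ e ∈ A, ∑ w ∈ univ.filter (fun w => w ∈ e), t w
        = (4*n - 1 : ℤ) * (2 * D) - 2 * D := by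
      rw [hA, Finset.sum_sdiff_eq_sub (M_subset_allEdges hM), hMtau, sum_tau t]
      have : ∑ w : Fin (4*n), t w = 2 * D := by
        rw [ht, hD]; exact sum_vw c hM
      rw [this]
      push_cast
      ring
    rw [hAsum] at hS
    rw [hAtau] at hS
    have hn4 : (4:ℤ) ≤ (4*n : ℤ) := by push_cast; omega
    nlinarith [hS, hD2, hn4, mul_pos (by linarith : (0:ℤ) < -D) (by linarith : (0:ℤ) < (4*n:ℤ) - 2)]

end S12

/-- in a balanced 2-edge-colouring of `K_{4n}` it cannot be that every
perfect matching is unbalanced; equivalently, some perfect matching is balanced. -/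
theorem stmt12 (n : ℕ) (hn : 1 ≤ n) (c : Sym2 (Fin (4 * n)) → Bool)
    (hbal : cnt c true (allEdges (4 * n)) = cnt c false (allEdges (4 * n)))
    (h : ∀ M : Finset (Sym2 (Fin (4 * n))), IsPM M → cnt c false M ≠ cnt c true M) :
    False := by
  classical
  have hbal0 : S12.DD c (allEdges (4*n)) = 0 := by
    rw [S12.DD_eq_cnt, hbal]; ring
  have hne0 : ∀ M' : Finset (Sym2 (Fin (4*n))), IsPM M' → S12.DD c M' ≠ 0 := by
    intro M' hM' h0
    rw [S12.DD_eq_cnt] at h0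
    have : cnt c false M' = cnt c true M' := by omega
    exact h M' hM' this
  obtain ⟨M0, hM0⟩ := S12.pm_exists n hn
  have hnonempty : (Finset.univ.filter (fun M : Finset (Sym2 (Fin (4*n))) => IsPM M)).Nonempty :=
    ⟨M0, by simp [hM0]⟩
  obtain ⟨Mm, hMm, hmin⟩ := Finset.exists_min_image _ (fun M => |S12.DD c M|) hnonempty
  rw [Finset.mem_filter] at hMm
  have hMmPM : IsPM Mm := hMm.2
  have hminall : ∀ M' : Finset (Sym2 (Fin (4*n))), IsPM M' → |S12.DD c Mm| ≤ |S12.DD c M'| := by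
    intro M' hM'
    exact hmin M' (by simp [hM'])
  rcases lt_trichotomy (S12.DD c Mm) 0 with hlt | heq | hgt
  · exact S12.aux n hn c hbal0 hne0 hMmPM hminall hlt
  · exact hne0 Mm hMmPM heq
  · set c' : Sym2 (Fin (4*n)) → Bool := fun e => ! c e with hc'
    have hwt' : ∀ e, S12.wt c' e = - S12.wt c e := by
      intro e
      rw [hc']
      unfold S12.wt
      cases hce : c e <;> simp [hce]
    have hDD' : ∀ F : Finset (Sym2 (Fin (4*n))), S12.DD c' F = - S12.DD c F := by
      intro F
      unfold S12.DD
      rw [← Finset.sum_neg_distrib]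
      exact Finset.sum_congr rfl (fun e _ => hwt' e)
    apply S12.aux n hn c' (by rw [hDD', hbal0]; ring)
      (fun M' hM' h0 => hne0 M' hM' (by rw [hDD'] at h0; omega))
      hMmPM
      (fun M' hM' => by rw [hDD', hDD', abs_neg, abs_neg]; exact hminall M' hM')
      (by rw [hDD']; omega)
end

section
/- Let M be a perfect matching of a 2-edge-coloured K_{4n} with n+1 black and n-1 red edges, suppose every red edge of G[V_B(M)] is incident to u or v where uv is a fixed black matching edge, and suppose all 4n edges from {u,v} to V_B(M) \ {u,v} are red. If some vertex z ∈ V_B(M) \ {u,v} is joined to a vertex y ∈ V_R(M) by a black edge, where xy is a red matching edge with ux red, then two successive swappings (first replacing {uv,xy} by {ux,vy}, then replacing {vy,zw} by {vw,yz}, where zw ∈ M) yield a perfect matching with equal numbers of red and black edges. -/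
open Finset

theorem swap_isPM {N : ℕ} {M : Finset (Sym2 (Fin N))} (h : IsPM M) {a b c d : Fin N}
    (hab : s(a,b) ∈ M) (hcd : s(c,d) ∈ M)
    (hac : a ≠ c) (had : a ≠ d) (hbc : b ≠ c) (hbd : b ≠ d) :
    IsPM (swap M a b c d) := by
  obtain ⟨hnd, huq⟩ := h
  have uniq : ∀ (t : Fin N) (e₁ e₂ : Sym2 (Fin N)), e₁ ∈ M → e₂ ∈ M → t ∈ e₁ → t ∈ e₂ →
      e₁ = e₂ := by
    intro t e₁ e₂ h1 h2 m1 m2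
    obtain ⟨e, -, he⟩ := huq t
    rw [he e₁ ⟨h1, m1⟩, he e₂ ⟨h2, m2⟩]
  have hane : a ≠ b := by have := hnd _ hab; simpa [Sym2.mk_isDiag_iff] using this
  have hcne : c ≠ d := by have := hnd _ hcd; simpa [Sym2.mk_isDiag_iff] using this
  constructor
  · intro e he
    rcases Finset.mem_union.mp he with h' | h'
    · exact hnd _ (Finset.mem_sdiff.mp h').1
    · simp only [Finset.mem_insert, Finset.mem_singleton] at h'
      rcases h' with rfl | rfl <;> simp [Sym2.mk_isDiag_iff, hac, hbd]
  · intro t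
    by_cases hta : t = a ∨ t = c
    · refine ⟨s(a,c), ⟨Finset.mem_union_right _ (by simp),
        by rcases hta with h|h <;> rw [h, Sym2.mem_iff] <;> simp⟩, ?_⟩
      rintro e' ⟨he', hte'⟩
      rcases Finset.mem_union.mp he' with h' | h'
      · exfalso
        obtain ⟨heM, heD⟩ := Finset.mem_sdiff.mp h'
        simp only [Finset.mem_insert, Finset.mem_singleton, not_or] at heD
        rcases hta with h|h
        · exact heD.1 (uniq t _ _ heM hab hte' (by rw [h, Sym2.mem_iff]; simp))
        · exact heD.2 (uniq t _ _ heM hcd hte' (by rw [h, Sym2.mem_iff]; simp))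
      · simp only [Finset.mem_insert, Finset.mem_singleton] at h'
        rcases h' with rfl | rfl
        · rfl
        · exfalso
          rw [Sym2.mem_iff] at hte'
          rcases hta with h|h <;> rcases hte' with h2|h2
          · exact hane (h.symm.trans h2)
          · exact had (h.symm.trans h2)
          · exact hbc (h.symm.trans h2).symm
          · exact hcne (h.symm.trans h2)
    · by_cases htb : t = b ∨ t = d
      · refine ⟨s(b,d), ⟨Finset.mem_union_right _ (by simp),
          by rcases htb with h|h <;> rw [h, Sym2.mem_iff] <;> simp⟩, ?_⟩
        rintro e' ⟨he', hte'⟩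
        rcases Finset.mem_union.mp he' with h' | h'
        · exfalso
          obtain ⟨heM, heD⟩ := Finset.mem_sdiff.mp h'
          simp only [Finset.mem_insert, Finset.mem_singleton, not_or] at heD
          rcases htb with h|h
          · exact heD.1 (uniq t _ _ heM hab hte' (by rw [h, Sym2.mem_iff]; simp))
          · exact heD.2 (uniq t _ _ heM hcd hte' (by rw [h, Sym2.mem_iff]; simp))
        · simp only [Finset.mem_insert, Finset.mem_singleton] at h'
          rcases h' with rfl | rfl
          · exfalso
            rw [Sym2.mem_iff] at hte'
            rcases htb with h|h <;> rcases hte' with h2|h2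
            · exact hane (h.symm.trans h2).symm
            · exact hbc (h.symm.trans h2)
            · exact had (h.symm.trans h2).symm
            · exact hcne (h.symm.trans h2).symm
          · rfl
      · push_neg at hta htb
        obtain ⟨et, ⟨hetM, hett⟩, hetu⟩ := huq t
        have h1 : et ≠ s(a,b) := by intro h; rw [h, Sym2.mem_iff] at hett; tauto
        have h2 : et ≠ s(c,d) := by intro h; rw [h, Sym2.mem_iff] at hett; tauto
        refine ⟨et, ⟨Finset.mem_union_left _ (Finset.mem_sdiff.mpr ⟨hetM, by simp [h1, h2]⟩),
          hett⟩, ?_⟩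
        rintro e' ⟨he', hte'⟩
        rcases Finset.mem_union.mp he' with h' | h'
        · exact hetu e' ⟨(Finset.mem_sdiff.mp h').1, hte'⟩
        · exfalso
          simp only [Finset.mem_insert, Finset.mem_singleton] at h'
          rcases h' with rfl | rfl <;> rw [Sym2.mem_iff] at hte' <;> tauto

theorem cnt_sdiff_union {N : ℕ} (c : Sym2 (Fin N) → Bool) (b : Bool)
    (M D A : Finset (Sym2 (Fin N))) (hD : D ⊆ M) (hA : ∀ e ∈ A, e ∉ M) :
    cnt c b ((M \ D) ∪ A) = cnt c b M - cnt c b D + cnt c b A := by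
  unfold cnt
  have h1 : (M \ D).filter (fun e => c e = b) =
      M.filter (fun e => c e = b) \ D.filter (fun e => c e = b) := by
    ext e; simp only [Finset.mem_filter, Finset.mem_sdiff]; tauto
  rw [Finset.filter_union, h1, Finset.card_union_of_disjoint, Finset.card_sdiff_of_subset
    (Finset.filter_subset_filter _ hD)]
  rw [Finset.disjoint_left]
  intro e he heA
  simp only [Finset.mem_filter, Finset.mem_sdiff] at he heA
  exact hA e heA.1 he.1.1

/-- in the final case of the proof, two successive swappings produce a
balanced perfect matching. -/
theorem stmt14 (n : ℕ) (c : Sym2 (Fin (4 * n)) → Bool) (M : Finset (Sym2 (Fin (4 * n))))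
    (hM : IsPM M)
    (htot : cnt c true (allEdges (4 * n)) = cnt c false (allEdges (4 * n)))
    (hb : cnt c false M = n + 1) (hr : cnt c true M = n - 1)
    (u v x y z w : Fin (4 * n))
    (huv : s(u, v) ∈ M) (huvb : c s(u, v) = false)
    (hredinc : ∀ e ∈ inside (VB c M), c e = true → u ∈ e ∨ v ∈ e)
    (halluv : ∀ t ∈ VB c M, t ≠ u → t ≠ v → c s(u, t) = true ∧ c s(v, t) = true)
    (hz : z ∈ VB c M) (hzu : z ≠ u) (hzv : z ≠ v)
    (hy : y ∈ VR c M)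
    (hxy : s(x, y) ∈ M) (hxyr : c s(x, y) = true)
    (hux : c s(u, x) = true)
    (hzy : c s(z, y) = false)
    (hzw : s(z, w) ∈ M) :
    IsPM (swap (swap M u v x y) v y w z) ∧
    cnt c true (swap (swap M u v x y) v y w z)
      = cnt c false (swap (swap M u v x y) v y w z) := by
  obtain ⟨hnd, huq⟩ := hM
  have uniq : ∀ (t : Fin (4*n)) (e₁ e₂ : Sym2 (Fin (4*n))), e₁ ∈ M → e₂ ∈ M → t ∈ e₁ → t ∈ e₂ →
      e₁ = e₂ := by
    intro t e₁ e₂ h1 h2 m1 m2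
    obtain ⟨e, -, he⟩ := huq t
    rw [he e₁ ⟨h1, m1⟩, he e₂ ⟨h2, m2⟩]
  -- basic colours
  have hzwb : c s(z, w) = false := by
    obtain ⟨-, e, heM, hze, heb⟩ := Finset.mem_filter.mp hz
    have : e = s(z, w) := uniq z e _ heM hzw hze (by simp)
    rwa [this] at heb
  -- nondiagonality
  have huvne : u ≠ v := by have := hnd _ huv; simpa [Sym2.mk_isDiag_iff] using this
  have hxyne : x ≠ y := by have := hnd _ hxy; simpa [Sym2.mk_isDiag_iff] using this
  have hzwne : z ≠ w := by have := hnd _ hzw; simpa [Sym2.mk_isDiag_iff] using this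
  -- edge distinctness by colour
  have hne_uvxy : s(u, v) ≠ s(x, y) := by
    intro h; rw [h, hxyr] at huvb; simp at huvb
  have hne_xyzw : s(x, y) ≠ s(z, w) := by
    intro h; rw [h, hzwb] at hxyr; simp at hxyr
  have hne_uvzw : s(u, v) ≠ s(z, w) := by
    intro h; rw [Sym2.eq_iff] at h
    rcases h with ⟨h1, -⟩ | ⟨-, h2⟩
    · exact hzu h1.symm
    · exact hzv h2.symm
  -- vertex distinctness
  have hux_ne : u ≠ x := by
    intro h; exact hne_uvxy (uniq u _ _ huv hxy (by simp) (by rw [h]; simp))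
  have huy_ne : u ≠ y := by
    intro h; exact hne_uvxy (uniq u _ _ huv hxy (by simp) (by rw [h]; simp))
  have hvx_ne : v ≠ x := by
    intro h; exact hne_uvxy (uniq v _ _ huv hxy (by simp) (by rw [h]; simp))
  have hvy_ne : v ≠ y := by
    intro h; exact hne_uvxy (uniq v _ _ huv hxy (by simp) (by rw [h]; simp))
  have hzx_ne : z ≠ x := by
    intro h; exact hne_xyzw (uniq z _ _ hxy hzw (by rw [h]; simp) (by simp))
  have hzy_ne : z ≠ y := by
    intro h; exact hne_xyzw (uniq z _ _ hxy hzw (by rw [h]; simp) (by simp))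
  have hwx_ne : w ≠ x := by
    intro h; exact hne_xyzw (uniq w _ _ hxy hzw (by rw [h]; simp) (by simp))
  have hwy_ne : w ≠ y := by
    intro h; exact hne_xyzw (uniq w _ _ hxy hzw (by rw [h]; simp) (by simp))
  have hwu_ne : w ≠ u := by
    intro h; exact hne_uvzw (uniq u _ _ huv hzw (by simp) (by rw [← h]; simp))
  have hwv_ne : w ≠ v := by
    intro h; exact hne_uvzw (uniq v _ _ huv hzw (by simp) (by rw [← h]; simp))
  -- w ∈ VB
  have hwVB : w ∈ VB c M := by
    simp only [VB, Finset.mem_filter, Finset.mem_univ, true_and]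
    exact ⟨s(z, w), hzw, by simp, hzwb⟩
  have hvw : c s(v, w) = true := (halluv w hwVB hwu_ne hwv_ne).2
  have hyzb : c s(y, z) = false := by rw [Sym2.eq_swap]; exact hzy
  -- new edges are not in M
  have hvyM : s(v, y) ∉ M := by
    intro h
    have h' := uniq v _ _ huv h (by simp) (by simp)
    rw [Sym2.eq_iff] at h'
    rcases h' with ⟨h1, -⟩ | ⟨h1, -⟩
    · exact huvne h1
    · exact huy_ne h1
  have huxM : s(u, x) ∉ M := by
    intro h
    have h' := uniq u _ _ huv h (by simp) (by simp)
    rw [Sym2.eq_iff] at h'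
    rcases h' with ⟨-, h2⟩ | ⟨h1, -⟩
    · exact hvx_ne h2
    · exact hux_ne h1
  have hvwM : s(v, w) ∉ M := by
    intro h
    have h' := uniq v _ _ huv h (by simp) (by simp)
    rw [Sym2.eq_iff] at h'
    rcases h' with ⟨h1, -⟩ | ⟨h1, -⟩
    · exact huvne h1
    · exact hwu_ne h1.symm
  have hyzM : s(y, z) ∉ M := by
    intro h
    have h' := uniq y _ _ hxy h (by simp) (by simp)
    rw [Sym2.eq_iff] at h'
    rcases h' with ⟨h1, -⟩ | ⟨h1, -⟩
    · exact hxyne h1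
    · exact hzx_ne h1.symm
  -- distinctness among new edges
  have hne_ux_vy : s(u, x) ≠ s(v, y) := by
    intro h; rw [Sym2.eq_iff] at h
    rcases h with ⟨h1, -⟩ | ⟨h1, -⟩
    · exact huvne h1
    · exact huy_ne h1
  have hne_ux_zw : s(u, x) ≠ s(z, w) := by
    intro h; rw [Sym2.eq_iff] at h
    rcases h with ⟨h1, -⟩ | ⟨h1, -⟩
    · exact hzu h1.symm
    · exact hwu_ne h1.symm
  have hne_ux_vw : s(u, x) ≠ s(v, w) := by
    intro h; rw [Sym2.eq_iff] at h
    rcases h with ⟨h1, -⟩ | ⟨h1, -⟩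
    · exact huvne h1
    · exact hwu_ne h1.symm
  -- the set identity for the double swap
  have hE : swap (swap M u v x y) v y w z =
      (M \ ({s(u, v), s(x, y), s(z, w)} : Finset (Sym2 (Fin (4 * n))))) ∪
        {s(u, x), s(v, w), s(y, z)} := by
    have h1 : s(w, z) = s(z, w) := Sym2.eq_swap
    unfold swap
    rw [h1]
    ext e
    simp only [Finset.mem_union, Finset.mem_sdiff, Finset.mem_insert, Finset.mem_singleton,
      not_or]
    constructor
    · rintro (⟨(⟨hM', hn1, hn2⟩ | rfl | rfl), hnv, hnz⟩ | rfl | rfl)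
      · exact Or.inl ⟨hM', hn1, hn2, hnz⟩
      · exact Or.inr (Or.inl rfl)
      · exact absurd rfl hnv
      · exact Or.inr (Or.inr (Or.inl rfl))
      · exact Or.inr (Or.inr (Or.inr rfl))
    · rintro (⟨hM', hn1, hn2, hn3⟩ | rfl | rfl | rfl)
      · exact Or.inl ⟨Or.inl ⟨hM', hn1, hn2⟩, fun h => hvyM (h ▸ hM'), hn3⟩
      · exact Or.inl ⟨Or.inr (Or.inl rfl), hne_ux_vy, hne_ux_zw⟩
      · exact Or.inr (Or.inl rfl)
      · exact Or.inr (Or.inr rfl)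
  -- perfect matching part, via two applications of swap_isPM
  have hPM1 : IsPM (swap M u v x y) :=
    swap_isPM ⟨hnd, huq⟩ huv hxy hux_ne huy_ne hvx_ne hvy_ne
  have hvyM1 : s(v, y) ∈ swap M u v x y := Finset.mem_union_right _ (by simp)
  have hwzM1 : s(w, z) ∈ swap M u v x y := by
    rw [Sym2.eq_swap]
    exact Finset.mem_union_left _ (Finset.mem_sdiff.mpr ⟨hzw, by
      simp only [Finset.mem_insert, Finset.mem_singleton, not_or]
      exact ⟨fun h => hne_uvzw h.symm, fun h => hne_xyzw h.symm⟩⟩)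
  have hPM2 : IsPM (swap (swap M u v x y) v y w z) :=
    swap_isPM hPM1 hvyM1 hwzM1 hwv_ne.symm hzv.symm hwy_ne.symm hzy_ne.symm
  refine ⟨hPM2, ?_⟩
  rw [hE]
  -- counting
  have hDsub : ({s(u, v), s(x, y), s(z, w)} : Finset (Sym2 (Fin (4 * n)))) ⊆ M := by
    intro e he
    simp only [Finset.mem_insert, Finset.mem_singleton] at he
    rcases he with rfl | rfl | rfl
    exacts [huv, hxy, hzw]
  have hAnotin : ∀ e ∈ ({s(u, x), s(v, w), s(y, z)} : Finset (Sym2 (Fin (4 * n)))), e ∉ M := by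
    intro e he
    simp only [Finset.mem_insert, Finset.mem_singleton] at he
    rcases he with rfl | rfl | rfl
    exacts [huxM, hvwM, hyzM]
  have hcal := fun b => cnt_sdiff_union c b M _ _ hDsub hAnotin
  have hDtrue : cnt c true ({s(u, v), s(x, y), s(z, w)} : Finset (Sym2 (Fin (4 * n)))) = 1 := by
    unfold cnt
    rw [Finset.filter_insert, Finset.filter_insert, Finset.filter_singleton]
    simp [huvb, hxyr, hzwb]
  have hDfalse : cnt c false ({s(u, v), s(x, y), s(z, w)} : Finset (Sym2 (Fin (4 * n)))) = 2 := by
    unfold cnt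
    rw [Finset.filter_insert, Finset.filter_insert, Finset.filter_singleton]
    simp only [huvb, hxyr, hzwb, if_true, if_false, reduceIte]
    rw [Finset.card_insert_of_notMem (by simp [hne_uvzw])]
    simp
  have hAtrue : cnt c true ({s(u, x), s(v, w), s(y, z)} : Finset (Sym2 (Fin (4 * n)))) = 2 := by
    unfold cnt
    rw [Finset.filter_insert, Finset.filter_insert, Finset.filter_singleton]
    simp only [hux, hvw, hyzb, if_true, if_false, reduceIte]
    rw [Finset.card_insert_of_notMem (by simp [hne_ux_vw])]
    simp
  have hAfalse : cnt c false ({s(u, x), s(v, w), s(y, z)} : Finset (Sym2 (Fin (4 * n)))) = 1 := by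
    unfold cnt
    rw [Finset.filter_insert, Finset.filter_insert, Finset.filter_singleton]
    simp [hux, hvw, hyzb]
  have hn2 : 1 ≤ n - 1 := by
    have : 0 < cnt c true M :=
      Finset.card_pos.mpr ⟨s(x, y), Finset.mem_filter.mpr ⟨hxy, hxyr⟩⟩
    omega
  rw [hcal true, hcal false, hDtrue, hDfalse, hAtrue, hAfalse, hb, hr]
  omega
end
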